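/- (Tanner's eigenvalue bound on expansion.) Let H be an r×n real matrix with all entries in {0,1}, such that every column sums to c and every row sums to d, and set Q = Hᵀ·H (so the all-ones vector 𝟙 ∈ ℝ^n satisfies Q·𝟙 = c·d·𝟙). Suppose λ₂ is a real number with λ₂ < c·d such that xᵀ·Q·x ≤ λ₂·xᵀ·x for every x ∈ ℝ^n orthogonal to 𝟙. Then for every nonempty set T of column indices with |T| = t, the number u of row indices j such that H_{ji} = 1 for some i ∈ T satisfies u ≥ c²·t / ((c·d − λ₂)·t/n + λ₂). -/

import Mathlib

/-!
Let `v` be the indicator vector of `T` and `y = H v`, so that `y j` counts the columns of `T`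
meeting row `j`. Since `𝟙` is an eigenvector of `Q = Hᵀ H` with eigenvalue `c d`, splitting `v`
into its mean and a part orthogonal to `𝟙` gives `‖y‖² = vᵀ Q v ≤ λ₂ (t - t²/n) + c d t²/n`.
On the other hand `y` has total mass `c t` and is supported on the `u` neighbouring rows, so
Cauchy–Schwarz gives `(c t)² ≤ u ‖y‖²`. Comparing the two bounds yields the theorem.
-/

open Matrix Finset

section

variable {m n 𝕜 : Type*} [Fintype n] [CommSemiring 𝕜] {H : Matrix m n 𝕜} {c d : 𝕜}

theorem mulVec_one_of_forall_sum_eq (hrow : ∀ j, ∑ i, H j i = d) : H *ᵥ 1 = d • 1 := by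
  ext j
  simp [mulVec, dotProduct_one, hrow]

theorem transpose_mul_self_mulVec_one [Fintype m] (hcol : ∀ i, ∑ j, H j i = c)
    (hrow : ∀ j, ∑ i, H j i = d) : (Hᵀ * H) *ᵥ 1 = (c * d) • 1 := by
  rw [← mulVec_mulVec, mulVec_one_of_forall_sum_eq hrow, mulVec_smul,
    mulVec_one_of_forall_sum_eq (H := Hᵀ) hcol, smul_smul, mul_comm]

theorem sum_mulVec_of_forall_sum_eq [Fintype m] (hcol : ∀ i, ∑ j, H j i = c) (v : n → 𝕜) :
    ∑ j, (H *ᵥ v) j = c * ∑ i, v i := by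
  rw [← one_dotProduct, dotProduct_mulVec, ← mulVec_transpose,
    mulVec_one_of_forall_sum_eq (H := Hᵀ) hcol, smul_dotProduct, one_dotProduct, smul_eq_mul]

end

section

variable {ι 𝕜 : Type*} [Fintype ι] [Field 𝕜] [LinearOrder 𝕜] [IsStrictOrderedRing 𝕜]

theorem dotProduct_mulVec_le_of_forall_sum_eq_zero {Q : Matrix ι ι 𝕜} {μ lam : 𝕜}
    (hQ : Q.IsSymm) (hQ1 : Q *ᵥ 1 = μ • 1)
    (hquad : ∀ x : ι → 𝕜, ∑ i, x i = 0 → x ⬝ᵥ Q *ᵥ x ≤ lam * (x ⬝ᵥ x)) (v : ι → 𝕜) :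
    v ⬝ᵥ Q *ᵥ v ≤
      lam * (v ⬝ᵥ v - (∑ i, v i) ^ 2 / Fintype.card ι) +
        μ * (∑ i, v i) ^ 2 / Fintype.card ι := by
  rcases isEmpty_or_nonempty ι with hι | hι
  · simp
  have hn : (Fintype.card ι : 𝕜) ≠ 0 := by simp
  set a := (∑ i, v i) / Fintype.card ι
  set x := v - a • 1
  have hv : v = x + a • 1 := by simp [x]
  have hsum : ∑ i, v i = a * Fintype.card ι := (div_mul_cancel₀ _ hn).symm
  have hx : ∑ i, x i = 0 := by simp [x, hsum, mul_comm]
  have hxQ1 : x ⬝ᵥ Q *ᵥ 1 = 0 := by rw [hQ1, dotProduct_smul, dotProduct_one, hx, smul_zero]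
  -- the cross term `1 ⬝ᵥ Q *ᵥ x` vanishes too because `Q` is symmetric
  have h1Qx : 1 ⬝ᵥ Q *ᵥ x = 0 := by
    rw [dotProduct_mulVec, ← mulVec_transpose, hQ.eq, dotProduct_comm, hxQ1]
  have hQv : v ⬝ᵥ Q *ᵥ v = x ⬝ᵥ Q *ᵥ x + μ * a ^ 2 * Fintype.card ι := by
    simp only [hv, mulVec_add, mulVec_smul, add_dotProduct, dotProduct_add, smul_dotProduct,
      dotProduct_smul, hxQ1, h1Qx]
    rw [hQ1, dotProduct_smul, one_dotProduct_one, smul_eq_mul, smul_eq_mul, smul_eq_mul]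
    ring
  have hvv : v ⬝ᵥ v = x ⬝ᵥ x + a ^ 2 * Fintype.card ι := by
    simp only [hv, add_dotProduct, dotProduct_add, smul_dotProduct, dotProduct_smul]
    rw [dotProduct_one x, one_dotProduct x, hx, one_dotProduct_one, smul_eq_mul, smul_eq_mul]
    ring
  have hsq : (a * Fintype.card ι) ^ 2 / Fintype.card ι = a ^ 2 * Fintype.card ι := by
    field_simp
  rw [hQv, hvv, hsum, mul_div_assoc μ, hsq, add_sub_cancel_right, ← mul_assoc]
  exact add_le_add_left (hquad x hx) _

theorem sq_sum_le_card_mul_dotProduct_self {y : ι → 𝕜} {N : Finset ι}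
    (hN : ∀ j ∉ N, y j = 0) : (∑ j, y j) ^ 2 ≤ #N * (y ⬝ᵥ y) := by
  have hsum : ∑ j, y j = ∑ j ∈ N, y j :=
    (sum_subset (subset_univ N) fun j _ hj => hN j hj).symm
  calc (∑ j, y j) ^ 2 = (∑ j ∈ N, y j) ^ 2 := by rw [hsum]
    _ ≤ #N * ∑ j ∈ N, y j ^ 2 := sq_sum_le_card_mul_sum_sq
    _ ≤ #N * (y ⬝ᵥ y) := by
      rw [dotProduct]
      gcongr
      simp_rw [← sq]
      exact sum_le_sum_of_subset_of_nonneg (subset_univ N) fun j _ _ => sq_nonneg _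

theorem sq_mul_div_le_of_sq_le_mul {a t D u : 𝕜} (ht : 0 ≤ t) (hu : 0 ≤ u)
    (h : (a * t) ^ 2 ≤ u * (t * D)) : a ^ 2 * t / D ≤ u := by
  rcases ht.eq_or_lt with rfl | ht
  · simpa using hu
  rcases le_or_gt D 0 with hD | hD
  · exact (div_nonpos_of_nonneg_of_nonpos (by positivity) hD).trans hu
  rw [div_le_iff₀ hD]
  nlinarith

end

open Classical in
theorem tanner_eigenvalue_expansion_bound_general {r n : ℕ}
    (H : Matrix (Fin r) (Fin n) ℝ) (c d lam2 : ℝ)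
    (h01 : ∀ j i, H j i = 0 ∨ H j i = 1)
    (hcol : ∀ i, ∑ j, H j i = c)
    (hrow : ∀ j, ∑ i, H j i = d)
    (hquad : ∀ x : Fin n → ℝ, (∑ i, x i) = 0 →
      x ⬝ᵥ (Hᵀ * H).mulVec x ≤ lam2 * (x ⬝ᵥ x))
    (T : Finset (Fin n)) :
    c ^ 2 * T.card / ((c * d - lam2) * T.card / n + lam2) ≤
      ((Finset.univ.filter (fun j => ∃ i ∈ T, H j i = 1)).card : ℝ) := by
  set v : Fin n → ℝ := fun i => if i ∈ T then 1 else 0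
  have hv_sum : ∑ i, v i = #T := by simp [v]
  have hv_self : v ⬝ᵥ v = #T := by simp [v, dotProduct]
  have hHv_supp : ∀ j ∉ univ.filter (fun j => ∃ i ∈ T, H j i = 1), (H *ᵥ v) j = 0 := by
    intro j hj
    simp only [mem_filter, mem_univ, true_and, not_exists, not_and] at hj
    simp only [mulVec, dotProduct, v, mul_ite, mul_one, mul_zero, sum_ite_mem, univ_inter]
    exact sum_eq_zero fun i hi => (h01 j i).resolve_right (hj i hi)
  have hHv_sq : (H *ᵥ v) ⬝ᵥ (H *ᵥ v) ≤ lam2 * (#T - #T ^ 2 / n) + c * d * #T ^ 2 / n := by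
    have hQ : (Hᵀ * H).IsSymm := by rw [IsSymm, transpose_mul, transpose_transpose]
    have hv_quad := dotProduct_mulVec_le_of_forall_sum_eq_zero hQ
      (transpose_mul_self_mulVec_one hcol hrow) hquad v
    rwa [← mulVec_mulVec, dotProduct_mulVec, vecMul_transpose, hv_sum, hv_self,
      Fintype.card_fin] at hv_quad
  have hCS := sq_sum_le_card_mul_dotProduct_self hHv_supp
  rw [sum_mulVec_of_forall_sum_eq hcol, hv_sum] at hCS
  refine sq_mul_div_le_of_sq_le_mul (Nat.cast_nonneg _) (Nat.cast_nonneg _) (hCS.trans ?_)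
  gcongr
  exact hHv_sq.trans_eq (by ring)

open Classical in
/-- Tanner's eigenvalue bound on expansion: for a `(c, d)`-regular 0-1 matrix
`H` whose matrix `Q = Hᵀ·H` has second eigenvalue bound `λ₂ < c·d` on the
orthogonal complement of the all-ones vector, any nonempty set `T` of `t`
columns has at least `c²·t / ((c·d − λ₂)·t/n + λ₂)` neighboring rows. -/
theorem tanner_eigenvalue_expansion_bound {r n : ℕ}
    (H : Matrix (Fin r) (Fin n) ℝ) (c d lam2 : ℝ)
    (h01 : ∀ j i, H j i = 0 ∨ H j i = 1)
    (hcol : ∀ i, ∑ j, H j i = c)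
    (hrow : ∀ j, ∑ i, H j i = d)
    (hlam : lam2 < c * d)
    (hquad : ∀ x : Fin n → ℝ, (∑ i, x i) = 0 →
      x ⬝ᵥ (Hᵀ * H).mulVec x ≤ lam2 * (x ⬝ᵥ x))
    (T : Finset (Fin n)) (hT : T.Nonempty) :
    c ^ 2 * T.card / ((c * d - lam2) * T.card / n + lam2) ≤
      ((Finset.univ.filter (fun j => ∃ i ∈ T, H j i = 1)).card : ℝ) :=
  tanner_eigenvalue_expansion_bound_general H c d lam2 h01 hcol hrow hquad T
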